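/- arXiv:2108.07078 — 2 statements merged into one kernel-verified Lean document; each statement's English description precedes it below -/
import Mathlib

section
/- For each n ≥ 2 let c_n, d_n > 0 with c_n, d_n = o(log n), p_n = c_n/n ∈ (0,1), q_n = d_n/n ∈ (0,1), let the prior on Θ_n be uniform, let θ_n ∈ Θ_n, and let a_n ∈ (0, 1/2) satisfy a_n → 0 and a_n·n → ∞. If there is a constant C > 1 such that (√c_n − √d_n)² + 4C·log(a_n) → ∞ as n → ∞, then P_{θ_n} Π(B_n(θ_n, ⌈a_n·n⌉) | X^n) → 1, i.e. the posterior recovers the community assignments almost-exactly with error rate k_n = ⌈a_n·n⌉. -/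
/-!
Under the uniform prior the posterior weight of `η` is at most `min 1 (p_η / p_θ) ≤ √(p_η / p_θ)`,
so the expected posterior mass of a set of assignments is at most the sum of the Hellinger
affinities `∑ₓ √(p_θ(x) p_η(x)) = ρ ^ (h (n - h))`, where `h` is the Hamming distance from `θ` to
`η` and `h (n - h)` is the number of edges whose probability changes. Since
`ρ ≤ exp (-(√p - √q)² / 2)` and `(n choose m) ≤ (e n / m) ^ m`, the `n choose k` assignments at
distance `k` with `m = min k (n - k) > aₙ n` together contribute at most `r ^ m`, where
`r = exp (1 - (√cₙ - √dₙ)² / 4) / aₙ`. Summing the two geometric tails bounds the mass outside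
the ball by `4 r`, and the hypothesis forces `r → 0`.
-/

open Finset Real Filter

/-- The set of potential edges of an `n`-vertex graph: pairs `(i,j)` with `i < j`. -/
abbrev Edge (n : ℕ) := {e : Fin n × Fin n // e.1 < e.2}

/-- An observed graph: an edge indicator for each potential edge. -/
abbrev ObsGraph (n : ℕ) := Edge n → Bool

/-- Edge probability under assignment `θ`: `p` within communities, `q` between. -/
noncomputable def edgeProb {n : ℕ} (p q : ℝ) (θ : Fin n → Bool) (e : Edge n) : ℝ :=
  if θ e.val.1 = θ e.val.2 then p else q

/-- Probability mass function of the observed graph under `θ`. -/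
noncomputable def graphPMF {n : ℕ} (p q : ℝ) (θ : Fin n → Bool) (x : ObsGraph n) : ℝ :=
  ∏ e : Edge n, if x e then edgeProb p q θ e else 1 - edgeProb p q θ e

/-- Hellinger affinity of Bernoulli parameters. -/
noncomputable def rho (p q : ℝ) : ℝ := Real.sqrt (p * q) + Real.sqrt ((1 - p) * (1 - q))

/-- Edges whose probability changes from `p` to `q` when replacing `θ` by `η`. -/
def D1 {n : ℕ} (θ η : Fin n → Bool) : Finset (Fin n × Fin n) :=
  Finset.univ.filter fun e => e.1 < e.2 ∧ θ e.1 = θ e.2 ∧ η e.1 ≠ η e.2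

/-- Edges whose probability changes from `q` to `p` when replacing `θ` by `η`. -/
def D2 {n : ℕ} (θ η : Fin n → Bool) : Finset (Fin n × Fin n) :=
  Finset.univ.filter fun e => e.1 < e.2 ∧ θ e.1 ≠ θ e.2 ∧ η e.1 = η e.2

/-- Hamming distance. -/
def hdist {n : ℕ} (θ η : Fin n → Bool) : ℕ := (Finset.univ.filter fun i => θ i ≠ η i).card

/-- The metric `k(θ,η) = h(θ,η) ∧ (n - h(θ,η))`. -/
def kdist {n : ℕ} (θ η : Fin n → Bool) : ℕ := min (hdist θ η) (n - hdist θ η)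

/-- Size of the smallest community. -/
def countOnes {n : ℕ} (θ : Fin n → Bool) : ℕ := (Finset.univ.filter fun i => θ i = true).card

/-- The parameter space `Θ_n`. -/
def Theta (n : ℕ) : Finset (Fin n → Bool) :=
  Finset.univ.filter fun θ => 2 * countOnes θ ≤ n ∧
    ∀ i : Fin n, 2 * countOnes θ = n → (i : ℕ) = 0 → θ i = false

/-- Posterior mass of `A ⊆ Θ_n` given data `x`, under prior mass function `π`. -/
noncomputable def postMass {n : ℕ} (p q : ℝ) (pri : (Fin n → Bool) → ℝ)
    (A : Finset (Fin n → Bool)) (x : ObsGraph n) : ℝ :=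
  (∑ η ∈ A, pri η * graphPMF p q η x) / (∑ η ∈ Theta n, pri η * graphPMF p q η x)

/-- `P_θ`-expectation of the posterior mass of `A`. -/
noncomputable def expPostMass {n : ℕ} (p q : ℝ) (pri : (Fin n → Bool) → ℝ)
    (θ : Fin n → Bool) (A : Finset (Fin n → Bool)) : ℝ :=
  ∑ x : ObsGraph n, graphPMF p q θ x * postMass p q pri A x

/-- The uniform prior on `Θ_n`. -/
noncomputable def unifPrior (n : ℕ) : (Fin n → Bool) → ℝ := fun _ => ((2:ℝ) ^ (n - 1))⁻¹

/-- Hamming ball `B_n(θ,k)` inside `Θ_n`. -/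
def hball {n : ℕ} (θ : Fin n → Bool) (k : ℕ) : Finset (Fin n → Bool) :=
  (Theta n).filter fun η => kdist η θ ≤ k

section Likelihood

variable {n : ℕ} {p q : ℝ}

lemma edgeProb_mem {s : Set ℝ} (hp : p ∈ s) (hq : q ∈ s) (θ : Fin n → Bool) (e : Edge n) :
    edgeProb p q θ e ∈ s := by
  unfold edgeProb; split <;> assumption

lemma graphPMF_pos (hp : p ∈ Set.Ioo (0:ℝ) 1) (hq : q ∈ Set.Ioo (0:ℝ) 1)
    (θ : Fin n → Bool) (x : ObsGraph n) : 0 < graphPMF p q θ x := by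
  refine Finset.prod_pos fun e _ => ?_
  have h := edgeProb_mem hp hq θ e
  split
  · exact h.1
  · linarith [h.2]

lemma sum_graphPMF (p q : ℝ) (θ : Fin n → Bool) : ∑ x : ObsGraph n, graphPMF p q θ x = 1 := by
  unfold graphPMF
  rw [← Fintype.prod_sum (fun e (b : Bool) =>
    if b then edgeProb p q θ e else 1 - edgeProb p q θ e)]
  simp

lemma rho_comm (p q : ℝ) : rho p q = rho q p := by
  rw [rho, rho, mul_comm p, mul_comm (1 - p)]

lemma rho_self {p : ℝ} (hp : p ∈ Set.Icc (0:ℝ) 1) : rho p p = 1 := by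
  rw [rho, Real.sqrt_mul_self hp.1, Real.sqrt_mul_self (by linarith [hp.2]), add_sub_cancel]

lemma rho_le_exp_neg_sq_sub {p q : ℝ} (hp : p ∈ Set.Icc (0:ℝ) 1) (hq : q ∈ Set.Icc (0:ℝ) 1) :
    rho p q ≤ Real.exp (-((√p - √q) ^ 2 / 2)) := by
  have hp' : 0 ≤ 1 - p := by linarith [hp.2]
  have hq' : 0 ≤ 1 - q := by linarith [hq.2]
  -- `1 - ρ` is half the squared Hellinger distance between the two Bernoulli laws
  have hsq : rho p q = 1 - ((√p - √q) ^ 2 + (√(1 - p) - √(1 - q)) ^ 2) / 2 := by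
    rw [rho, Real.sqrt_mul hp.1, Real.sqrt_mul hp']
    nlinarith [Real.sq_sqrt hp.1, Real.sq_sqrt hq.1, Real.sq_sqrt hp', Real.sq_sqrt hq']
  calc rho p q ≤ 1 - (√p - √q) ^ 2 / 2 := by
        rw [hsq]; nlinarith [sq_nonneg (√(1 - p) - √(1 - q))]
    _ ≤ Real.exp (-((√p - √q) ^ 2 / 2)) := by
        linarith [Real.add_one_le_exp (-((√p - √q) ^ 2 / 2))]

lemma sum_bool_sqrt_mul_bernoulli (A B : ℝ) :
    ∑ b : Bool, √((if b then A else 1 - A) * (if b then B else 1 - B)) = rho A B := by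
  rw [Fintype.sum_bool, if_pos rfl, if_pos rfl, if_neg Bool.false_ne_true,
    if_neg Bool.false_ne_true, rho]

lemma rho_edgeProb (hp : p ∈ Set.Icc (0:ℝ) 1) (hq : q ∈ Set.Icc (0:ℝ) 1)
    (θ η : Fin n → Bool) (e : Edge n) :
    rho (edgeProb p q θ e) (edgeProb p q η e) =
      if (θ e.1.1 ≠ η e.1.1 ↔ θ e.1.2 = η e.1.2) then rho p q else 1 := by
  unfold edgeProb
  cases θ e.1.1 <;> cases θ e.1.2 <;> cases η e.1.1 <;> cases η e.1.2 <;>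
    simp [rho_self hp, rho_self hq, rho_comm q p]

end Likelihood

section Pairs

variable {α : Type*} [LinearOrder α] [Fintype α]

lemma card_filter_mem_iff_notMem_of_lt (s : Finset α) :
    #(univ.filter fun e : {e : α × α // e.1 < e.2} => (e.1.1 ∈ s ↔ e.1.2 ∉ s)) = #s * #sᶜ := by
  rw [← Finset.card_product]
  refine Finset.card_bij' (fun e _ => if e.1.1 ∈ s then e.1 else e.1.swap)
    (fun st h => ⟨(min st.1 st.2, max st.1 st.2), min_lt_max.2 fun h' => ?_⟩) ?_ ?_ ?_ ?_
  · simp only [Finset.mem_product, Finset.mem_compl] at h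
    exact h.2 (h' ▸ h.1)
  all_goals
    simp only [Finset.mem_product, Finset.mem_compl, Finset.mem_filter, Finset.mem_univ, true_and]
  · rintro ⟨⟨i, j⟩, hij⟩ h
    by_cases hi : i ∈ s <;> simp_all
  · rintro ⟨i, j⟩ ⟨hi, hj⟩
    rcases le_total i j with h | h <;> simp_all
  · rintro ⟨⟨i, j⟩, hij⟩ h
    by_cases hi : i ∈ s <;> simp_all [hij.le]
  · rintro ⟨i, j⟩ ⟨hi, hj⟩
    rcases le_total i j with h | h <;> simp_all

end Pairs

section Hellinger

variable {n : ℕ} {p q : ℝ}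

lemma card_filter_edge_changed (θ η : Fin n → Bool) :
    #(univ.filter fun e : Edge n => (θ e.1.1 ≠ η e.1.1 ↔ θ e.1.2 = η e.1.2)) =
      hdist θ η * (n - hdist θ η) := by
  have h := card_filter_mem_iff_notMem_of_lt (univ.filter fun i => θ i ≠ η i)
  rw [Finset.card_compl, Fintype.card_fin] at h
  rw [hdist, ← h]
  simp

lemma sum_sqrt_graphPMF_mul (hp : p ∈ Set.Icc (0:ℝ) 1) (hq : q ∈ Set.Icc (0:ℝ) 1)
    (θ η : Fin n → Bool) :
    ∑ x : ObsGraph n, √(graphPMF p q θ x * graphPMF p q η x) =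
      rho p q ^ (hdist θ η * (n - hdist θ η)) := by
  have hbern : ∀ (A : ℝ), A ∈ Set.Icc (0:ℝ) 1 → ∀ b : Bool, 0 ≤ if b then A else 1 - A := by
    intro A hA b; split <;> linarith [hA.1, hA.2]
  calc ∑ x : ObsGraph n, √(graphPMF p q θ x * graphPMF p q η x)
      = ∑ x : ObsGraph n, ∏ e, √((if x e then edgeProb p q θ e else 1 - edgeProb p q θ e) *
          (if x e then edgeProb p q η e else 1 - edgeProb p q η e)) := by
        refine Finset.sum_congr rfl fun x _ => ?_
        rw [graphPMF, graphPMF, ← Finset.prod_mul_distrib, Real.sqrt_prod]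
        exact fun e _ =>
          mul_nonneg (hbern _ (edgeProb_mem hp hq θ e) _) (hbern _ (edgeProb_mem hp hq η e) _)
    _ = ∏ e : Edge n, rho (edgeProb p q θ e) (edgeProb p q η e) := by
        rw [← Fintype.prod_sum (fun e (b : Bool) =>
          √((if b then edgeProb p q θ e else 1 - edgeProb p q θ e) *
            (if b then edgeProb p q η e else 1 - edgeProb p q η e)))]
        simp only [sum_bool_sqrt_mul_bernoulli]
    _ = rho p q ^ (hdist θ η * (n - hdist θ η)) := by
        simp only [rho_edgeProb hp hq, Finset.prod_ite, Finset.prod_const, one_pow, mul_one,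
          card_filter_edge_changed]

end Hellinger

lemma mul_div_le_sqrt_mul {P Q w S : ℝ} (hP : 0 ≤ P) (hQ : 0 ≤ Q) (hw : 0 ≤ w)
    (hPS : w * P ≤ S) (hQS : w * Q ≤ S) : P * (w * Q / S) ≤ √(P * Q) := by
  rcases (mul_nonneg hw hQ).trans hQS |>.eq_or_lt with hS | hS
  · rw [← hS, div_zero, mul_zero]; exact Real.sqrt_nonneg _
  have hx0 : 0 ≤ w * Q / S := div_nonneg (mul_nonneg hw hQ) hS.le
  have hx1 : w * Q / S ≤ 1 := (div_le_one hS).2 hQS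
  have hPx : P * (w * Q / S) ≤ Q := by
    rw [mul_div_assoc', div_le_iff₀ hS]
    nlinarith
  refine Real.le_sqrt_of_sq_le ?_
  calc (P * (w * Q / S)) ^ 2 = (P * (w * Q / S)) * (P * (w * Q / S)) := sq _
    _ ≤ Q * P := mul_le_mul hPx (mul_le_of_le_one_right hP hx1) (mul_nonneg hP hx0) hQ
    _ = P * Q := mul_comm _ _

section Posterior

variable {n : ℕ} {p q : ℝ}

lemma unifPrior_pos (η : Fin n → Bool) : 0 < unifPrior n η := by
  unfold unifPrior; positivity

lemma evidence_pos (hp : p ∈ Set.Ioo (0:ℝ) 1) (hq : q ∈ Set.Ioo (0:ℝ) 1)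
    {θ : Fin n → Bool} (hθ : θ ∈ Theta n) (x : ObsGraph n) :
    0 < ∑ η ∈ Theta n, unifPrior n η * graphPMF p q η x :=
  Finset.sum_pos' (fun η _ => (mul_pos (unifPrior_pos η) (graphPMF_pos hp hq η x)).le)
    ⟨θ, hθ, mul_pos (unifPrior_pos θ) (graphPMF_pos hp hq θ x)⟩

lemma expPostMass_nonneg (hp : p ∈ Set.Ioo (0:ℝ) 1) (hq : q ∈ Set.Ioo (0:ℝ) 1)
    (θ : Fin n → Bool) (A : Finset (Fin n → Bool)) :
    0 ≤ expPostMass p q (unifPrior n) θ A := by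
  have hw : ∀ η x, 0 ≤ unifPrior n η * graphPMF p q η x := fun η x =>
    (mul_pos (unifPrior_pos η) (graphPMF_pos hp hq η x)).le
  exact Finset.sum_nonneg fun x _ => mul_nonneg (graphPMF_pos hp hq θ x).le <|
    div_nonneg (Finset.sum_nonneg fun η _ => hw η x) (Finset.sum_nonneg fun η _ => hw η x)

lemma expPostMass_eq_one_sub_sdiff (hp : p ∈ Set.Ioo (0:ℝ) 1) (hq : q ∈ Set.Ioo (0:ℝ) 1)
    {θ : Fin n → Bool} (hθ : θ ∈ Theta n) {B : Finset (Fin n → Bool)} (hB : B ⊆ Theta n) :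
    expPostMass p q (unifPrior n) θ B = 1 - expPostMass p q (unifPrior n) θ (Theta n \ B) := by
  have hpost : ∀ x, postMass p q (unifPrior n) B x
      = 1 - postMass p q (unifPrior n) (Theta n \ B) x := by
    intro x
    rw [postMass, postMass, eq_sub_iff_add_eq, ← add_div,
      div_eq_one_iff_eq (evidence_pos hp hq hθ x).ne', add_comm, Finset.sum_sdiff hB]
  simp only [expPostMass, hpost, mul_sub, mul_one, Finset.sum_sub_distrib, sum_graphPMF]

lemma expPostMass_le_sum_rho_pow (hp : p ∈ Set.Ioo (0:ℝ) 1) (hq : q ∈ Set.Ioo (0:ℝ) 1)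
    {θ : Fin n → Bool} (hθ : θ ∈ Theta n) {A : Finset (Fin n → Bool)} (hA : A ⊆ Theta n) :
    expPostMass p q (unifPrior n) θ A ≤ ∑ η ∈ A, rho p q ^ (hdist θ η * (n - hdist θ η)) := by
  have hweight : ∀ η ∈ Theta n, ∀ x,
      unifPrior n θ * graphPMF p q η x ≤ ∑ η' ∈ Theta n, unifPrior n η' * graphPMF p q η' x :=
    fun η hη x => Finset.single_le_sum (f := fun η' => unifPrior n η' * graphPMF p q η' x)
      (fun η' _ => (mul_pos (unifPrior_pos η') (graphPMF_pos hp hq η' x)).le) hη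
  calc expPostMass p q (unifPrior n) θ A
      = ∑ η ∈ A, ∑ x, graphPMF p q θ x * (unifPrior n θ * graphPMF p q η x /
          ∑ η' ∈ Theta n, unifPrior n η' * graphPMF p q η' x) := by
        simp only [expPostMass, postMass, Finset.sum_div, Finset.mul_sum]
        exact Finset.sum_comm
    _ ≤ ∑ η ∈ A, ∑ x, √(graphPMF p q θ x * graphPMF p q η x) :=
        Finset.sum_le_sum fun η hη => Finset.sum_le_sum fun x _ =>
          mul_div_le_sqrt_mul (graphPMF_pos hp hq θ x).le (graphPMF_pos hp hq η x).le
            (unifPrior_pos θ).le (hweight θ hθ x) (hweight η (hA hη) x)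
    _ = ∑ η ∈ A, rho p q ^ (hdist θ η * (n - hdist θ η)) := by
        simp only [sum_sqrt_graphPMF_mul (Set.mem_Icc_of_Ioo hp) (Set.mem_Icc_of_Ioo hq)]

end Posterior

section Counting

variable {n : ℕ}

lemma hdist_comm (θ η : Fin n → Bool) : hdist θ η = hdist η θ := hammingDist_comm θ η

lemma sum_hdist_eq_sum_choose {M : Type*} [AddCommMonoid M] (θ : Fin n → Bool) (G : ℕ → M) :
    ∑ η : Fin n → Bool, G (hdist η θ) = ∑ k ∈ range (n + 1), n.choose k • G k := by
  calc ∑ η : Fin n → Bool, G (hdist η θ)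
      = ∑ s ∈ (univ : Finset (Fin n)).powerset, G #s := by
        refine Finset.sum_nbij' (fun η => univ.filter fun i => η i ≠ θ i)
          (fun s i => if i ∈ s then !θ i else θ i) ?_ ?_ ?_ ?_ fun η _ => rfl
        · simp
        · simp
        · intro η _; funext i; cases hη : η i <;> cases hθ : θ i <;> simp [hη, hθ]
        · intro s _; ext i; by_cases h : i ∈ s <;> simp [h]
    _ = ∑ k ∈ range (n + 1), n.choose k • G k := by
        rw [Finset.sum_powerset_apply_card, Finset.card_univ, Fintype.card_fin]

end Counting

lemma choose_le_exp_one_mul_div_pow (n m : ℕ) : (n.choose m : ℝ) ≤ (Real.exp 1 * n / m) ^ m := by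
  rcases m.eq_zero_or_pos with rfl | hm
  · simp
  have hm' : (0:ℝ) < m := by exact_mod_cast hm
  calc (n.choose m : ℝ) ≤ (n : ℝ) ^ m / m.factorial := Nat.choose_le_pow_div m n
    _ = (n / m : ℝ) ^ m * ((m : ℝ) ^ m / m.factorial) := by
        rw [mul_div_assoc', div_pow, div_mul_cancel₀ _ (pow_ne_zero _ hm'.ne')]
    _ ≤ (n / m : ℝ) ^ m * Real.exp m :=
        mul_le_mul_of_nonneg_left (Real.pow_div_factorial_le_exp _ m.cast_nonneg m) (by positivity)
    _ = (Real.exp 1 * n / m) ^ m := by rw [← Real.exp_one_pow]; ring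

lemma choose_mul_pow_le_of_two_mul_le {n m : ℕ} {a s ρ : ℝ} (ha : 0 < a) (hs : 0 ≤ s)
    (hρ0 : 0 ≤ ρ) (hρ : ρ ≤ Real.exp (-(s / 2))) (hmn : 2 * m ≤ n) (ham : a * n ≤ m) :
    n.choose m * ρ ^ (m * (n - m)) ≤ (Real.exp (1 - n * s / 4) / a) ^ m := by
  rcases m.eq_zero_or_pos with rfl | hm
  · simp
  have hm' : (0:ℝ) < m := by exact_mod_cast hm
  have hchoose : (n.choose m : ℝ) ≤ (Real.exp 1 / a) ^ m := by
    refine (choose_le_exp_one_mul_div_pow n m).trans (pow_le_pow_left₀ (by positivity) ?_ m)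
    rw [div_le_div_iff₀ hm' ha]
    nlinarith [mul_le_mul_of_nonneg_left ham (Real.exp_pos 1).le]
  have hpow : ρ ^ (m * (n - m)) ≤ Real.exp (-(n * s / 4)) ^ m := by
    have hcast : ((m * (n - m) : ℕ) : ℝ) = m * (n - m : ℝ) := by
      push_cast [Nat.cast_sub (by omega : m ≤ n)]; ring
    have h2m : 2 * (m : ℝ) ≤ n := by exact_mod_cast hmn
    calc ρ ^ (m * (n - m)) ≤ Real.exp (-(s / 2)) ^ (m * (n - m)) := pow_le_pow_left₀ hρ0 hρ _
      _ = Real.exp (-(s / 2) * (m * (n - m : ℝ))) := by rw [← hcast, ← Real.exp_nat_mul, mul_comm]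
      _ ≤ Real.exp (-(n * s / 4) * m) := Real.exp_le_exp.2 (by
          nlinarith [mul_nonneg (mul_nonneg hs hm'.le) (sub_nonneg.2 h2m)])
      _ = Real.exp (-(n * s / 4)) ^ m := by rw [mul_comm, Real.exp_nat_mul]
  calc n.choose m * ρ ^ (m * (n - m))
      ≤ (Real.exp 1 / a) ^ m * Real.exp (-(n * s / 4)) ^ m :=
        mul_le_mul hchoose hpow (by positivity) (by positivity)
    _ = (Real.exp (1 - n * s / 4) / a) ^ m := by
        rw [← mul_pow, sub_eq_add_neg, Real.exp_add]; ring

lemma choose_mul_pow_le_of_le_min {n k : ℕ} {a s ρ : ℝ} (ha : 0 < a) (hs : 0 ≤ s)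
    (hρ0 : 0 ≤ ρ) (hρ : ρ ≤ Real.exp (-(s / 2))) (hk : k ≤ n) (ham : a * n ≤ min k (n - k)) :
    n.choose k * ρ ^ (k * (n - k)) ≤ (Real.exp (1 - n * s / 4) / a) ^ min k (n - k) := by
  rcases le_total k (n - k) with h | h
  · rw [min_eq_left h] at ham ⊢
    exact choose_mul_pow_le_of_two_mul_le ha hs hρ0 hρ (by omega) ham
  · rw [min_eq_right h] at ham ⊢
    have := choose_mul_pow_le_of_two_mul_le ha hs hρ0 hρ (by omega) ham
    rwa [Nat.choose_symm hk, Nat.sub_sub_self hk, mul_comm (n - k)] at this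

lemma sum_range_le_four_mul_of_le_pow_min {r : ℝ} (hr0 : 0 ≤ r) (hr : r ≤ 1 / 2) {n : ℕ}
    {f : ℕ → ℝ} (hf : ∀ k ≤ n, f k ≤ if 0 < min k (n - k) then r ^ min k (n - k) else 0) :
    ∑ k ∈ range (n + 1), f k ≤ 4 * r := by
  set g : ℕ → ℝ := fun k => if 0 < k then r ^ k else 0
  have hg0 : ∀ k, 0 ≤ g k := fun k => by simp only [g]; split <;> positivity
  have hsum : ∑ k ∈ range (n + 1), g k ≤ 2 * r :=
    calc ∑ k ∈ range (n + 1), g k = ∑ k ∈ Ico 1 (n + 1), r ^ k := by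
          simp only [g]
          rw [← Finset.sum_filter]
          congr 1; ext k; simp only [Finset.mem_filter, Finset.mem_range, Finset.mem_Ico]; omega
      _ ≤ r ^ 1 / (1 - r) := geom_sum_Ico_le_of_lt_one hr0 (by linarith)
      _ ≤ 2 * r := by rw [pow_one, div_le_iff₀ (by linarith)]; nlinarith
  calc ∑ k ∈ range (n + 1), f k ≤ ∑ k ∈ range (n + 1), (g k + g (n - k)) := by
        refine Finset.sum_le_sum fun k hk => (hf k (by simpa [Nat.lt_succ_iff] using hk)).trans ?_
        split_ifs with hmin
        · have hk : 0 < k := (lt_min_iff.1 hmin).1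
          have hnk : 0 < n - k := (lt_min_iff.1 hmin).2
          rcases min_choice k (n - k) with hm | hm <;>
            simp only [hm, g, if_pos hk, if_pos hnk, le_add_iff_nonneg_left,
              le_add_iff_nonneg_right, pow_nonneg hr0]
        · exact add_nonneg (hg0 k) (hg0 (n - k))
    _ = ∑ k ∈ range (n + 1), g k + ∑ k ∈ range (n + 1), g k := by
        rw [Finset.sum_add_distrib, ← Finset.sum_range_reflect g (n + 1), Nat.add_sub_cancel]
    _ ≤ 4 * r := by linarith

section Recovery

variable {n : ℕ} {p q : ℝ}

lemma expPostMass_le_one (hp : p ∈ Set.Ioo (0:ℝ) 1) (hq : q ∈ Set.Ioo (0:ℝ) 1)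
    {θ : Fin n → Bool} (hθ : θ ∈ Theta n) (k : ℕ) :
    expPostMass p q (unifPrior n) θ (hball θ k) ≤ 1 := by
  rw [expPostMass_eq_one_sub_sdiff hp hq hθ (B := hball θ k) (Finset.filter_subset _ _)]
  linarith [expPostMass_nonneg hp hq θ (Theta n \ hball θ k)]

lemma expPostMass_sdiff_hball_le (hp : p ∈ Set.Ioo (0:ℝ) 1) (hq : q ∈ Set.Ioo (0:ℝ) 1)
    {θ : Fin n → Bool} (hθ : θ ∈ Theta n) {a : ℝ} (ha : 0 < a)
    (hr : Real.exp (1 - n * (√p - √q) ^ 2 / 4) / a ≤ 1 / 2) :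
    expPostMass p q (unifPrior n) θ (Theta n \ hball θ ⌈a * n⌉₊) ≤
      4 * (Real.exp (1 - n * (√p - √q) ^ 2 / 4) / a) := by
  set K := ⌈a * n⌉₊
  have hρ0 : 0 ≤ rho p q := by unfold rho; positivity
  set G : ℕ → ℝ := fun k => if K < min k (n - k) then rho p q ^ (k * (n - k)) else 0
  have hG0 : ∀ k, 0 ≤ G k := fun k => by simp only [G]; split <;> positivity
  calc expPostMass p q (unifPrior n) θ (Theta n \ hball θ K)
      ≤ ∑ η ∈ Theta n \ hball θ K, rho p q ^ (hdist θ η * (n - hdist θ η)) :=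
        expPostMass_le_sum_rho_pow hp hq hθ Finset.sdiff_subset
    _ = ∑ η ∈ Theta n \ hball θ K, G (hdist η θ) := by
        refine Finset.sum_congr rfl fun η hη => ?_
        simp only [hball, Finset.mem_sdiff, Finset.mem_filter, not_and, not_le] at hη
        have hK : K < min (hdist η θ) (n - hdist η θ) := hη.2 hη.1
        simp only [G]
        rw [if_pos hK, hdist_comm]
    _ ≤ ∑ η, G (hdist η θ) :=
        Finset.sum_le_sum_of_subset_of_nonneg (Finset.subset_univ _) fun _ _ _ => hG0 _
    _ = ∑ k ∈ range (n + 1), n.choose k * G k := by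
        simp only [sum_hdist_eq_sum_choose, nsmul_eq_mul]
    _ ≤ 4 * (Real.exp (1 - n * (√p - √q) ^ 2 / 4) / a) := by
        refine sum_range_le_four_mul_of_le_pow_min (by positivity) hr fun k hk => ?_
        simp only [G]
        by_cases hK : K < min k (n - k)
        · rw [if_pos hK, if_pos (by omega)]
          exact choose_mul_pow_le_of_le_min ha (sq_nonneg _) hρ0
            (rho_le_exp_neg_sq_sub (Set.mem_Icc_of_Ioo hp) (Set.mem_Icc_of_Ioo hq)) hk
            ((Nat.le_ceil _).trans (by exact_mod_cast hK.le))
        · rw [if_neg hK, mul_zero]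
          split <;> positivity

end Recovery

lemma mul_sq_sqrt_div_sub_sqrt_div (x y : ℝ) {t : ℝ} (ht : 0 < t) :
    t * (√(x / t) - √(y / t)) ^ 2 = (√x - √y) ^ 2 := by
  rw [Real.sqrt_div' x ht.le, Real.sqrt_div' y ht.le, ← sub_div, div_pow, Real.sq_sqrt ht.le,
    mul_div_cancel₀ _ ht.ne']

lemma one_sub_le_expPostMass_hball {n : ℕ} {p q : ℝ} (hp : p ∈ Set.Ioo (0:ℝ) 1)
    (hq : q ∈ Set.Ioo (0:ℝ) 1) {θ : Fin n → Bool} (hθ : θ ∈ Theta n) {a : ℝ} (ha : 0 < a)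
    (hr : Real.exp (1 - n * (√p - √q) ^ 2 / 4) / a ≤ 1 / 2) :
    1 - 4 * (Real.exp (1 - n * (√p - √q) ^ 2 / 4) / a) ≤
      expPostMass p q (unifPrior n) θ (hball θ ⌈a * n⌉₊) := by
  rw [expPostMass_eq_one_sub_sdiff hp hq hθ (B := hball θ _) (Finset.filter_subset _ _)]
  linarith [expPostMass_sdiff_hball_le hp hq hθ ha hr]

theorem stmt14_general (c d : ℕ → ℝ)
    (hp : ∀ n, 2 ≤ n → c n / n ∈ Set.Ioo (0:ℝ) 1)
    (hq : ∀ n, 2 ≤ n → d n / n ∈ Set.Ioo (0:ℝ) 1)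
    (θ : (n : ℕ) → Fin n → Bool) (hθ : ∀ n, 2 ≤ n → θ n ∈ Theta n)
    (a : ℕ → ℝ) (ha : ∀ n, a n ∈ Set.Ioo (0:ℝ) (1/2))
    (hcond : ∃ C : ℝ, 1 < C ∧ Filter.Tendsto
      (fun n : ℕ => (Real.sqrt (c n) - Real.sqrt (d n))^2 + 4 * C * Real.log (a n))
      Filter.atTop Filter.atTop) :
    Filter.Tendsto (fun n : ℕ =>
        expPostMass (c n / n) (d n / n) (unifPrior n) (θ n)
          (hball (θ n) ⌈a n * n⌉₊))
      Filter.atTop (nhds 1) := by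
  obtain ⟨C, hC, hlim⟩ := hcond
  set r : ℕ → ℝ := fun n => Real.exp (1 - n * (√(c n / n) - √(d n / n)) ^ 2 / 4) / a n
  -- `log aₙ < 0` and `C > 1`, so the hypothesis makes `(√cₙ - √dₙ)²/4 + log aₙ` diverge
  have hu : Tendsto (fun n => (√(c n) - √(d n)) ^ 2 / 4 + Real.log (a n)) atTop atTop := by
    refine tendsto_atTop_mono (fun n => ?_) (hlim.atTop_div_const (by norm_num : (0:ℝ) < 4))
    have hlog : Real.log (a n) ≤ 0 := Real.log_nonpos (ha n).1.le (by linarith [(ha n).2])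
    nlinarith
  have hr : Tendsto r atTop (nhds 0) := by
    refine (Real.tendsto_exp_atBot.comp (tendsto_atBot_add_const_left _ 1
      (tendsto_neg_atTop_atBot.comp hu))).congr' ?_
    filter_upwards [eventually_gt_atTop 0] with n hn
    simp only [r, Function.comp_apply, mul_sq_sqrt_div_sub_sqrt_div _ _ (Nat.cast_pos.2 hn),
      Real.exp_sub, Real.exp_add, Real.exp_neg, Real.exp_log (ha n).1]
    ring
  refine tendsto_of_tendsto_of_tendsto_of_le_of_le' (g := fun n => 1 - 4 * r n)
    (by simpa using (hr.const_mul 4).const_sub 1) tendsto_const_nhds ?_ ?_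
  · filter_upwards [eventually_ge_atTop 2,
      hr.eventually (ge_mem_nhds (by norm_num : (0:ℝ) < 1 / 2))] with n hn hrn
    exact one_sub_le_expPostMass_hball (hp n hn) (hq n hn) (hθ n hn) (ha n).1 hrn
  · filter_upwards [eventually_ge_atTop 2] with n hn
    exact expPostMass_le_one (hp n hn) (hq n hn) (hθ n hn) _

/-- if `a_n → 0`, `a_n n → ∞` and `(√c_n − √d_n)² + 4C log a_n → ∞`
for some `C > 1`, then the posterior recovers the community assignments
almost-exactly with error rate `⌈a_n n⌉`. -/
theorem stmt14 (c d : ℕ → ℝ) (hc0 : ∀ n, 2 ≤ n → 0 < c n) (hd0 : ∀ n, 2 ≤ n → 0 < d n)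
    (hco : c =o[Filter.atTop] fun n : ℕ => Real.log n)
    (hdo : d =o[Filter.atTop] fun n : ℕ => Real.log n)
    (hp : ∀ n, 2 ≤ n → c n / n ∈ Set.Ioo (0:ℝ) 1)
    (hq : ∀ n, 2 ≤ n → d n / n ∈ Set.Ioo (0:ℝ) 1)
    (θ : (n : ℕ) → Fin n → Bool) (hθ : ∀ n, 2 ≤ n → θ n ∈ Theta n)
    (a : ℕ → ℝ) (ha : ∀ n, a n ∈ Set.Ioo (0:ℝ) (1/2))
    (ha0 : Filter.Tendsto a Filter.atTop (nhds 0))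
    (han : Filter.Tendsto (fun n : ℕ => a n * n) Filter.atTop Filter.atTop)
    (hcond : ∃ C : ℝ, 1 < C ∧ Filter.Tendsto
      (fun n : ℕ => (Real.sqrt (c n) - Real.sqrt (d n))^2 + 4 * C * Real.log (a n))
      Filter.atTop Filter.atTop) :
    Filter.Tendsto (fun n : ℕ =>
        expPostMass (c n / n) (d n / n) (unifPrior n) (θ n)
          (hball (θ n) ⌈a n * n⌉₊))
      Filter.atTop (nhds 1) :=
  stmt14_general c d hp hq θ hθ a ha hcond
end

section
/- For every integer n ≥ 1 and every real x ∈ [0,1], the sum Σ_{k=1}^{⌊n/2⌋} C(n,k)·x^{k(n−k)} satisfies Σ_{k=1}^{⌊n/2⌋} C(n,k)·x^{k(n−k)} ≤ (1 + x^{n/2})^n − 1 ≤ n·x^{n/2}·exp(n·x^{n/2}). -/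
/-!
Put `y = x^{n/2}`. For `1 ≤ k ≤ n/2` we have `k(n-k) ≥ kn/2`, so `x^{k(n-k)} ≤ y^k` because
`x ≤ 1`; hence the sum is dominated by part of the binomial expansion of `(1 + y)^n - 1`.
The second inequality follows from `(1 + y)^n ≤ e^{ny}` and `e^t - 1 ≤ t e^t`.
-/

open Finset Real

lemma one_add_pow_sub_one_eq_sum_Icc {R : Type*} [CommRing R] (y : R) (n : ℕ) :
    (1 + y) ^ n - 1 = ∑ k ∈ Icc 1 n, (n.choose k : R) * y ^ k := by
  rw [add_comm, add_pow, range_eq_Ico, sum_eq_sum_Ico_succ_bot (by omega : 0 < n + 1), zero_add,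
    Ico_add_one_right_eq_Icc]
  simp [mul_comm]

lemma pow_mul_sub_le_rpow_half_pow {x : ℝ} (hx0 : 0 ≤ x) (hx1 : x ≤ 1) {n k : ℕ}
    (hkn : 2 * k ≤ n) : x ^ (k * (n - k)) ≤ (x ^ ((n : ℝ) / 2)) ^ k := by
  rw [← rpow_mul_natCast hx0, ← rpow_natCast]
  apply rpow_le_rpow_of_exponent_ge' hx0 hx1 (by positivity)
  have hkn' : 2 * (k : ℝ) ≤ n := by exact_mod_cast hkn
  push_cast [Nat.cast_sub (by omega : k ≤ n)]
  nlinarith [(Nat.cast_nonneg k : (0 : ℝ) ≤ k)]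

lemma one_add_pow_le_exp_mul {y : ℝ} (hy : -1 ≤ y) (n : ℕ) : (1 + y) ^ n ≤ exp (n * y) := by
  rw [exp_nat_mul]
  gcongr
  · linarith
  · linarith [add_one_le_exp y]

lemma exp_sub_one_le_mul_exp (t : ℝ) : exp t - 1 ≤ t * exp t := by
  have h : (1 - t) * exp t ≤ exp (-t) * exp t :=
    mul_le_mul_of_nonneg_right (one_sub_le_exp_neg t) (exp_pos t).le
  rw [← exp_add, neg_add_cancel, exp_zero] at h
  linarith

theorem stmt19_general (n : ℕ) (x : ℝ) (hx : x ∈ Set.Icc (0:ℝ) 1) :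
    (∑ k ∈ Finset.Icc 1 (n / 2), (n.choose k : ℝ) * x ^ (k * (n - k))
        ≤ (1 + x ^ ((n : ℝ) / 2)) ^ n - 1)
    ∧ (1 + x ^ ((n : ℝ) / 2)) ^ n - 1
        ≤ (n : ℝ) * x ^ ((n : ℝ) / 2) * Real.exp ((n : ℝ) * x ^ ((n : ℝ) / 2)) := by
  obtain ⟨hx0, hx1⟩ := hx
  set y := x ^ ((n : ℝ) / 2)
  have hy0 : 0 ≤ y := rpow_nonneg hx0 _
  constructor
  · calc ∑ k ∈ Icc 1 (n / 2), (n.choose k : ℝ) * x ^ (k * (n - k))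
        ≤ ∑ k ∈ Icc 1 (n / 2), (n.choose k : ℝ) * y ^ k := by
          refine sum_le_sum fun k hk ↦ mul_le_mul_of_nonneg_left ?_ (by positivity)
          exact pow_mul_sub_le_rpow_half_pow hx0 hx1 (by grind)
      _ ≤ ∑ k ∈ Icc 1 n, (n.choose k : ℝ) * y ^ k :=
          sum_le_sum_of_subset_of_nonneg (Icc_subset_Icc_right (Nat.div_le_self n 2))
            fun _ _ _ ↦ by positivity
      _ = (1 + y) ^ n - 1 := (one_add_pow_sub_one_eq_sum_Icc y n).symm
  · calc (1 + y) ^ n - 1 ≤ exp (n * y) - 1 := by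
          gcongr
          exact one_add_pow_le_exp_mul (by linarith) n
      _ ≤ n * y * exp (n * y) := exp_sub_one_le_mul_exp _

/-- for `n ≥ 1` and `x ∈ [0,1]`,
`Σ_{k=1}^{⌊n/2⌋} C(n,k) x^{k(n−k)} ≤ (1 + x^{n/2})^n − 1 ≤ n x^{n/2} exp(n x^{n/2})`. -/
theorem stmt19 (n : ℕ) (hn : 1 ≤ n) (x : ℝ) (hx : x ∈ Set.Icc (0:ℝ) 1) :
    (∑ k ∈ Finset.Icc 1 (n / 2), (n.choose k : ℝ) * x ^ (k * (n - k))
        ≤ (1 + x ^ ((n : ℝ) / 2)) ^ n - 1)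
    ∧ (1 + x ^ ((n : ℝ) / 2)) ^ n - 1
        ≤ (n : ℝ) * x ^ ((n : ℝ) / 2) * Real.exp ((n : ℝ) * x ^ ((n : ℝ) / 2)) :=
  stmt19_general n x hx
end
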